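/- For two input-enabled pQTSs A_i and A_s: A_i ⊑_pioco A_s if and only if trd(A_i) ⊆ trd(A_s). -/

import Mathlib

noncomputable section
attribute [local instance] Classical.propDecidable

structure pQTS (S L T : Type) [Fintype S] [Fintype L] [Fintype T] where
  init : S
  inputs : Set L
  delta : L
  delta_not_input : delta ∉ inputs
  src : T → S
  dist : T → L × S → ℝ
  dist_nonneg : ∀ t x, 0 ≤ dist t x
  dist_sum : ∀ t, ∑ x, dist t x = 1
  input_reactive : ∀ t (a : L) (s' : S), a ∈ inputs → 0 < dist t (a, s') →
    ∀ (b : L) (s'' : S), b ≠ a → dist t (b, s'') = 0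

variable {S L T : Type} [Fintype S] [Fintype L] [Fintype T]

/-- A step of a path: the transition (distribution) taken, the action, the target state. -/
abbrev PStep (S L T : Type) := T × L × S

/-- A finite path, stored with the most recent step first. -/
abbrev PPath (S L T : Type) := List (PStep S L T)

def lastState (A : pQTS S L T) : PPath S L T → S
  | [] => A.init
  | x :: _ => x.2.2

def ValidPath (A : pQTS S L T) : PPath S L T → Prop
  | [] => True
  | x :: π => ValidPath A π ∧ A.src x.1 = lastState A π ∧ 0 < A.dist x.1 (x.2.1, x.2.2)

def ptrace : PPath S L T → List L
  | [] => []
  | x :: π => ptrace π ++ [x.2.1]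

/-- A (partial, randomized, history-dependent) adversary: to each finite path it assigns
a distribution over the available transitions (`some t`) plus halting (`none`). -/
def IsAdversary (A : pQTS S L T) (E : PPath S L T → Option T → ℝ) : Prop :=
  (∀ π o, 0 ≤ E π o) ∧
  (∀ π t, 0 < E π (some t) → A.src t = lastState A π) ∧
  (∀ π, E π none + ∑ t, E π (some t) = 1)

/-- The path probability function `Q^E`. -/
def Qprob (A : pQTS S L T) (E : PPath S L T → Option T → ℝ) : PPath S L T → ℝ
  | [] => 1
  | x :: π => Qprob A E π * E π (some x.1) * A.dist x.1 (x.2.1, x.2.2)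

def pathsOfLength (A : pQTS S L T) : ℕ → Finset (PPath S L T)
  | 0 => {[]}
  | n + 1 => (pathsOfLength A n).biUnion
      (fun π => Finset.univ.image (fun x : PStep S L T => x :: π))

/-- The cone probability `P_H(C_σ)` of a finite trace σ under the trace distribution of `E`. -/
def traceProb (A : pQTS S L T) (E : PPath S L T → Option T → ℝ) (σ : List L) : ℝ :=
  ∑ π ∈ (pathsOfLength A σ.length).filter (fun π => ValidPath A π ∧ ptrace π = σ),
    Qprob A E π

def haltsAfter (E : PPath S L T → Option T → ℝ) (k : ℕ) : Prop :=
  ∀ π : PPath S L T, k ≤ π.length → E π none = 1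

/-- `trd A k`: trace distributions of adversaries of `A` halting after `k` steps,
represented by their cone probability functions on finite traces. -/
def trd (A : pQTS S L T) (k : ℕ) : Set (List L → ℝ) :=
  {f | ∃ E, IsAdversary A E ∧ haltsAfter E k ∧ ∀ σ, f σ = traceProb A E σ}

/-- `trdAll A`: all trace distributions of `A`. -/
def trdAll (A : pQTS S L T) : Set (List L → ℝ) :=
  {f | ∃ E, IsAdversary A E ∧ ∀ σ, f σ = traceProb A E σ}

/-- `H ⊑_k H'` : the two trace distributions agree on all traces of length `k`. -/
def prefixTD (L : Type) (k : ℕ) (H H' : List L → ℝ) : Prop :=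
  ∀ σ : List L, σ.length = k → H σ = H' σ

/-- Output continuations of `H` in `A` w.r.t. length `k`. -/
def outcont (H : List L → ℝ) (A : pQTS S L T) (k : ℕ) : Set (List L → ℝ) :=
  {H' | H' ∈ trd A (k + 1) ∧ prefixTD L k H H' ∧
    ∀ (σ : List L) (a : L), σ.length = k → a ∈ A.inputs → H' (σ ++ [a]) = 0}

def inputEnabled (A : pQTS S L T) : Prop :=
  ∀ s : S, ∀ a ∈ A.inputs, ∃ (t : T) (s' : S), A.src t = s ∧ 0 < A.dist t (a, s')

def pioco {S1 T1 S2 T2 : Type} [Fintype S1] [Fintype T1] [Fintype S2] [Fintype T2]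
    (Ai : pQTS S1 L T1) (As : pQTS S2 L T2) : Prop :=
  ∀ k : ℕ, ∀ H ∈ trd As k, outcont H Ai k ⊆ outcont H As k

def Traces (A : pQTS S L T) : Set (List L) :=
  {σ | ∃ π : PPath S L T, ValidPath A π ∧ ptrace π = σ}

/-- `out_A(σ)`: outputs (including quiescence) enabled after trace σ. -/
def outSet (A : pQTS S L T) (σ : List L) : Set L :=
  {a | a ∉ A.inputs ∧ ∃ π : PPath S L T, ValidPath A π ∧ ptrace π = σ ∧
    ∃ (t : T) (s' : S), A.src t = lastState A π ∧ 0 < A.dist t (a, s')}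

def ioco {S1 T1 S2 T2 : Type} [Fintype S1] [Fintype T1] [Fintype S2] [Fintype T2]
    (Ai : pQTS S1 L T1) (As : pQTS S2 L T2) : Prop :=
  ∀ σ ∈ Traces As, outSet Ai σ ⊆ outSet As σ

/-- A (nonprobabilistic) QTS: every occurring distribution is a Dirac distribution. -/
def IsQTS (A : pQTS S L T) : Prop :=
  ∀ t : T, ∃ x : L × S, ∀ y, A.dist t y = if y = x then 1 else 0

/-!
Truncating adversaries of `As` after `k + 1` steps turns `trdAll Ai ⊆ trdAll As` into `pioco`.
Conversely, `pioco` gives `trd Ai k ⊆ trd As k` by induction on `k`. Restricting a `(k + 1)`-step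
adversary of `Ai` to output transitions in its last step yields an output continuation, which
`pioco` realises in `As`; the input extensions that were cut off are then recovered in `As` by
diverting the halting probability after each trace of length `k` to input transitions, which
exist because `As` is input-enabled. Finally, adversaries are points of a product of unit
intervals, so a limit along an ultrafilter of adversaries of `As` matching ever longer prefixes
realises any trace distribution of `Ai`.
-/

section Paths

variable {A : pQTS S L T} {E F : PPath S L T → Option T → ℝ}

def IsAdversaryAt (A : pQTS S L T) (π : PPath S L T) (e : Option T → ℝ) : Prop :=
  (∀ o, 0 ≤ e o) ∧ (∀ t, 0 < e (some t) → A.src t = lastState A π) ∧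
    e none + ∑ t, e (some t) = 1

lemma isAdversary_iff_forall_isAdversaryAt :
    IsAdversary A E ↔ ∀ π, IsAdversaryAt A π (E π) :=
  ⟨fun h π => ⟨h.1 π, h.2.1 π, h.2.2 π⟩,
    fun h => ⟨fun π => (h π).1, fun π => (h π).2.1, fun π => (h π).2.2⟩⟩

namespace IsAdversary

lemma sum_some_le_one (hE : IsAdversary A E) (π : PPath S L T) : ∑ t, E π (some t) ≤ 1 := by
  linarith [hE.2.2 π, hE.1 π none]

lemma le_one (hE : IsAdversary A E) (π : PPath S L T) : ∀ o, E π o ≤ 1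
  | none => by
    linarith [hE.2.2 π, Finset.sum_nonneg fun t (_ : t ∈ Finset.univ) => hE.1 π (some t)]
  | some t => (Finset.single_le_sum (fun t _ => hE.1 π (some t)) (Finset.mem_univ t)).trans
      (hE.sum_some_le_one π)

lemma some_eq_zero_of_none_eq_one (hE : IsAdversary A E) {π : PPath S L T}
    (h : E π none = 1) (t : T) : E π (some t) = 0 := by
  have hsum : ∑ t, E π (some t) = 0 := by linarith [hE.2.2 π]
  exact (Finset.sum_eq_zero_iff_of_nonneg fun t _ => hE.1 π (some t)).1 hsum t
    (Finset.mem_univ t)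

lemma some_eq_zero_of_src_ne (hE : IsAdversary A E) {π : PPath S L T} {t : T}
    (h : A.src t ≠ lastState A π) : E π (some t) = 0 :=
  ((hE.1 π (some t)).eq_or_lt.resolve_right fun hlt => h (hE.2.1 π t hlt)).symm

end IsAdversary

lemma mem_pathsOfLength : ∀ {n : ℕ} {π : PPath S L T}, π ∈ pathsOfLength A n ↔ π.length = n
  | 0, π => by simp [pathsOfLength]
  | n + 1, [] => by simp [pathsOfLength]
  | n + 1, x :: π => by simp [pathsOfLength, mem_pathsOfLength]

lemma sum_pathsOfLength_succ {β : Type*} [AddCommMonoid β] (n : ℕ) (φ : PPath S L T → β) :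
    ∑ ρ ∈ pathsOfLength A (n + 1), φ ρ = ∑ π ∈ pathsOfLength A n, ∑ x, φ (x :: π) := by
  rw [pathsOfLength, Finset.sum_biUnion]
  · exact Finset.sum_congr rfl fun π _ =>
      Finset.sum_image fun x _ y _ h => (List.cons.inj h).1
  · intro π _ ρ _ hne
    simp only [Function.onFun, Finset.disjoint_left, Finset.mem_image, Finset.mem_univ,
      true_and]
    rintro _ ⟨_, rfl⟩ ⟨y, h⟩
    exact hne (List.cons.inj h).2.symm

lemma length_ptrace : ∀ π : PPath S L T, (ptrace π).length = π.length
  | [] => rfl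
  | x :: π => by simp [ptrace, length_ptrace π]

def tracePaths (A : pQTS S L T) (σ : List L) : Finset (PPath S L T) :=
  (pathsOfLength A σ.length).filter fun π => ValidPath A π ∧ ptrace π = σ

lemma traceProb_eq_sum_tracePaths (σ : List L) :
    traceProb A E σ = ∑ π ∈ tracePaths A σ, Qprob A E π := rfl

lemma mem_tracePaths {σ : List L} {π : PPath S L T} :
    π ∈ tracePaths A σ ↔ ValidPath A π ∧ ptrace π = σ := by
  simp only [tracePaths, Finset.mem_filter, mem_pathsOfLength, and_iff_right_iff_imp]
  rintro ⟨-, rfl⟩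
  exact (length_ptrace π).symm

lemma length_of_mem_tracePaths {σ : List L} {π : PPath S L T} (h : π ∈ tracePaths A σ) :
    π.length = σ.length := by
  rw [← (mem_tracePaths.1 h).2, length_ptrace]

lemma Qprob_nonneg (hE : IsAdversary A E) : ∀ π, 0 ≤ Qprob A E π
  | [] => zero_le_one
  | _ :: π => mul_nonneg (mul_nonneg (Qprob_nonneg hE π) (hE.1 π _)) (A.dist_nonneg _ _)

lemma traceProb_nonneg (hE : IsAdversary A E) (σ : List L) : 0 ≤ traceProb A E σ :=
  Finset.sum_nonneg fun π _ => Qprob_nonneg hE π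

lemma Qprob_congr {n : ℕ} (h : ∀ π : PPath S L T, π.length < n → E π = F π) :
    ∀ π : PPath S L T, π.length ≤ n → Qprob A E π = Qprob A F π
  | [], _ => rfl
  | x :: π, hl => by
    have hlt : π.length < n := hl
    rw [Qprob, Qprob, Qprob_congr h π hlt.le, h π hlt]

lemma traceProb_congr {n : ℕ} (h : ∀ π : PPath S L T, π.length < n → E π = F π)
    {σ : List L} (hσ : σ.length ≤ n) : traceProb A E σ = traceProb A F σ :=
  Finset.sum_congr rfl fun π hπ =>
    Qprob_congr h π ((length_of_mem_tracePaths hπ).trans_le hσ)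

lemma traceProb_nil : traceProb A E [] = 1 := by
  simp [traceProb, pathsOfLength, ValidPath, ptrace, Qprob, Finset.filter_singleton]

lemma traceProb_eq_zero_of_haltsAfter (hE : IsAdversary A E) {k : ℕ} (hk : haltsAfter E k)
    {σ : List L} (hσ : k < σ.length) : traceProb A E σ = 0 := by
  refine Finset.sum_eq_zero fun π hπ => ?_
  have hlen := length_of_mem_tracePaths hπ
  obtain _ | ⟨x, π⟩ := π
  · simp only [List.length_nil] at hlen
    omega
  · rw [List.length_cons] at hlen
    rw [Qprob, hE.some_eq_zero_of_none_eq_one (hk π (by omega)), mul_zero, zero_mul]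

end Paths

section OneStep

variable {A : pQTS S L T} {F : PPath S L T → Option T → ℝ}

def actionProb (A : pQTS S L T) (t : T) (c : L) : ℝ := ∑ s, A.dist t (c, s)

lemma actionProb_nonneg (t : T) (c : L) : 0 ≤ actionProb A t c :=
  Finset.sum_nonneg fun _ _ => A.dist_nonneg _ _

lemma sum_actionProb (t : T) : ∑ c, actionProb A t c = 1 := by
  rw [← A.dist_sum t, Fintype.sum_prod_type]
  rfl

lemma actionProb_eq_zero_of_ne {t : T} {a c : L} (ha : a ∈ A.inputs)
    (hpos : 0 < actionProb A t a) (hc : c ≠ a) : actionProb A t c = 0 := by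
  obtain ⟨s, -, hs⟩ := Finset.exists_lt_of_sum_lt (by rwa [Finset.sum_const_zero] :
    ∑ _s : S, (0 : ℝ) < ∑ s, A.dist t (a, s))
  exact Finset.sum_eq_zero fun s' _ => A.input_reactive t a s ha hs c s' hc

lemma actionProb_eq_ite {t : T} {a : L} (ha : a ∈ A.inputs) (hpos : 0 < actionProb A t a)
    (c : L) : actionProb A t c = if c = a then 1 else 0 := by
  split_ifs with hc
  · subst hc
    have h := sum_actionProb (A := A) t
    rwa [Finset.sum_eq_single c (fun b _ hb => actionProb_eq_zero_of_ne ha hpos hb)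
      (by simp)] at h
  · exact actionProb_eq_zero_of_ne ha hpos hc

lemma Qprob_cons_indicator (hF : IsAdversary A F) (σ : List L) (c : L) (π : PPath S L T)
    (x : PStep S L T) :
    (if ValidPath A (x :: π) ∧ ptrace (x :: π) = σ ++ [c] then Qprob A F (x :: π) else 0) =
      (if ValidPath A π ∧ ptrace π = σ then Qprob A F π else 0) * F π (some x.1) *
        (if x.2.1 = c then A.dist x.1 (x.2.1, x.2.2) else 0) := by
  obtain ⟨t, a, s⟩ := x
  simp only [ValidPath, ptrace, List.append_singleton_inj]
  by_cases hv : ValidPath A π ∧ ptrace π = σ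
  · by_cases hsrc : A.src t = lastState A π
    · rcases (A.dist_nonneg t (a, s)).eq_or_lt with hd | hd
      · simp [← hd]
      · simp [hv, hsrc, hd, Qprob]
    · simp [hsrc, hF.some_eq_zero_of_src_ne hsrc]
  · have hcons : ¬((ValidPath A π ∧ A.src t = lastState A π ∧ 0 < A.dist t (a, s)) ∧
        ptrace π = σ ∧ a = c) := fun h => hv ⟨h.1.1, h.2.1⟩
    simp [hcons, hv]

lemma sum_mul_actionProb (e : Option T → ℝ) (c : L) :
    ∑ x : PStep S L T, e (some x.1) * (if x.2.1 = c then A.dist x.1 (x.2.1, x.2.2) else 0) =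
      ∑ t, e (some t) * actionProb A t c := by
  rw [Fintype.sum_prod_type]
  refine Finset.sum_congr rfl fun t _ => ?_
  rw [Fintype.sum_prod_type, actionProb, Finset.mul_sum]
  simp [← Finset.mul_sum]

lemma traceProb_snoc (hF : IsAdversary A F) (σ : List L) (c : L) :
    traceProb A F (σ ++ [c]) =
      ∑ π ∈ tracePaths A σ, Qprob A F π * ∑ t, F π (some t) * actionProb A t c := by
  rw [traceProb_eq_sum_tracePaths, tracePaths, tracePaths, Finset.sum_filter,
    Finset.sum_filter, List.length_append, List.length_singleton, sum_pathsOfLength_succ]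
  refine Finset.sum_congr rfl fun π _ => ?_
  simp_rw [Qprob_cons_indicator hF σ c π, mul_assoc, ← Finset.mul_sum, sum_mul_actionProb]
  split_ifs <;> simp

lemma sum_traceProb_snoc (hF : IsAdversary A F) (σ : List L) :
    ∑ c, traceProb A F (σ ++ [c]) = ∑ π ∈ tracePaths A σ, Qprob A F π * ∑ t, F π (some t) := by
  simp_rw [traceProb_snoc hF, Finset.mul_sum]
  rw [Finset.sum_comm]
  refine Finset.sum_congr rfl fun π _ => ?_
  rw [Finset.sum_comm]
  simp_rw [← Finset.mul_sum, sum_actionProb, mul_one]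

/-- The probability of halting right after trace `σ`. -/
lemma sum_Qprob_mul_none (hF : IsAdversary A F) (σ : List L) :
    ∑ π ∈ tracePaths A σ, Qprob A F π * F π none =
      traceProb A F σ - ∑ c, traceProb A F (σ ++ [c]) := by
  rw [sum_traceProb_snoc hF, traceProb_eq_sum_tracePaths, ← Finset.sum_sub_distrib]
  refine Finset.sum_congr rfl fun π _ => ?_
  linear_combination Qprob A F π * hF.2.2 π

lemma sum_traceProb_snoc_le (hF : IsAdversary A F) (σ : List L) :
    ∑ c, traceProb A F (σ ++ [c]) ≤ traceProb A F σ := by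
  have hhalt : 0 ≤ ∑ π ∈ tracePaths A σ, Qprob A F π * F π none :=
    Finset.sum_nonneg fun π _ => mul_nonneg (Qprob_nonneg hF π) (hF.1 π none)
  linarith [sum_Qprob_mul_none hF σ]

end OneStep

section Splice

variable {A : pQTS S L T} {E G : PPath S L T → Option T → ℝ} {k : ℕ}

def haltAdv : PPath S L T → Option T → ℝ := fun _ o => if o = none then 1 else 0

lemma isAdversaryAt_haltAdv (π : PPath S L T) : IsAdversaryAt A π (haltAdv π) :=
  ⟨fun o => by unfold haltAdv; split_ifs <;> norm_num, fun t h => by simp [haltAdv] at h,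
    by simp [haltAdv]⟩

lemma isAdversary_haltAdv : IsAdversary A haltAdv :=
  isAdversary_iff_forall_isAdversaryAt.2 isAdversaryAt_haltAdv

lemma haltsAfter_haltAdv (k : ℕ) : haltsAfter (haltAdv (S := S) (L := L) (T := T)) k :=
  fun _ _ => if_pos rfl

def splice (E G : PPath S L T → Option T → ℝ) (k : ℕ) : PPath S L T → Option T → ℝ :=
  fun π => if π.length < k then E π else if π.length = k then G π else haltAdv π

lemma splice_of_lt {π : PPath S L T} (h : π.length < k) : splice E G k π = E π := if_pos h

lemma splice_of_eq {π : PPath S L T} (h : π.length = k) : splice E G k π = G π := by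
  simp [splice, h]

lemma splice_of_gt {π : PPath S L T} (h : k < π.length) : splice E G k π = haltAdv π := by
  simp [splice, h.not_gt, h.ne']

lemma isAdversary_splice (hE : IsAdversary A E)
    (hG : ∀ π, π.length = k → IsAdversaryAt A π (G π)) : IsAdversary A (splice E G k) := by
  rw [isAdversary_iff_forall_isAdversaryAt] at hE ⊢
  intro π
  rcases lt_trichotomy π.length k with h | h | h
  · rw [splice_of_lt h]
    exact hE π
  · rw [splice_of_eq h]
    exact hG π h
  · rw [splice_of_gt h]
    exact isAdversaryAt_haltAdv π

lemma haltsAfter_splice_succ : haltsAfter (splice E G k) (k + 1) := fun π hπ => by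
  rw [splice_of_gt hπ]
  rfl

lemma haltsAfter_splice_haltAdv : haltsAfter (splice E haltAdv k) k := fun π hπ => by
  rcases hπ.eq_or_lt with h | h
  · rw [splice_of_eq h.symm]
    rfl
  · rw [splice_of_gt h]
    rfl

lemma traceProb_splice_of_length_le {σ : List L} (hσ : σ.length ≤ k) :
    traceProb A (splice E G k) σ = traceProb A E σ :=
  traceProb_congr (fun _ hπ => splice_of_lt hπ) hσ

lemma traceProb_splice_snoc (hS : IsAdversary A (splice E G k)) {σ : List L}
    (hσ : σ.length = k) (c : L) :
    traceProb A (splice E G k) (σ ++ [c]) =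
      ∑ π ∈ tracePaths A σ, Qprob A E π * ∑ t, G π (some t) * actionProb A t c := by
  rw [traceProb_snoc hS]
  refine Finset.sum_congr rfl fun π hπ => ?_
  have hπk : π.length = k := (length_of_mem_tracePaths hπ).trans hσ
  rw [Qprob_congr (fun _ hρ => splice_of_lt hρ) π hπk.le, splice_of_eq hπk]

lemma isAdversary_splice_haltAdv (hE : IsAdversary A E) : IsAdversary A (splice E haltAdv k) :=
  isAdversary_splice hE fun π _ => isAdversaryAt_haltAdv π

lemma traceProb_splice_haltAdv_mem_trd (hE : IsAdversary A E) (k : ℕ) :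
    traceProb A (splice E haltAdv k) ∈ trd A k :=
  ⟨_, isAdversary_splice_haltAdv hE, haltsAfter_splice_haltAdv, fun _ => rfl⟩

lemma trd_subset_trdAll : trd A k ⊆ trdAll A := fun _ ⟨E, hE, _, hf⟩ => ⟨E, hE, hf⟩

lemma eq_zero_of_mem_trd {f : List L → ℝ} (hf : f ∈ trd A k) {σ : List L}
    (hσ : k < σ.length) : f σ = 0 := by
  obtain ⟨E, hE, hEk, hfE⟩ := hf
  rw [hfE, traceProb_eq_zero_of_haltsAfter hE hEk hσ]

lemma mem_trd_of_mem_trdAll {f : List L → ℝ} (hf : f ∈ trdAll A)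
    (hzero : ∀ σ : List L, k < σ.length → f σ = 0) : f ∈ trd A k := by
  obtain ⟨E, hE, hfE⟩ := hf
  refine ⟨_, isAdversary_splice_haltAdv hE, haltsAfter_splice_haltAdv, fun σ => ?_⟩
  rcases le_or_gt σ.length k with hσ | hσ
  · rw [traceProb_splice_of_length_le hσ, hfE]
  · exact (hzero σ hσ).trans (eq_zero_of_mem_trd (traceProb_splice_haltAdv_mem_trd hE k) hσ).symm

lemma traceProb_of_haltsAfter_zero (hE : IsAdversary A E)
    (h : haltsAfter E 0) (σ : List L) : traceProb A E σ = if σ = [] then 1 else 0 := by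
  split_ifs with hσ
  · rw [hσ, traceProb_nil]
  · exact traceProb_eq_zero_of_haltsAfter hE h (List.length_pos_iff.2 hσ)

lemma trd_zero : trd A 0 = {fun σ => if σ = [] then 1 else 0} := by
  ext f
  refine ⟨fun ⟨E, hE, h0, hf⟩ => funext fun σ => ?_, fun hf => ?_⟩
  · rw [hf, traceProb_of_haltsAfter_zero hE h0]
  · rw [Set.mem_singleton_iff.1 hf]
    exact ⟨haltAdv, isAdversary_haltAdv, haltsAfter_haltAdv 0,
      fun σ => (traceProb_of_haltsAfter_zero isAdversary_haltAdv (haltsAfter_haltAdv 0) σ).symm⟩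

end Splice

section OutputPart

variable {A : pQTS S L T} {E : PPath S L T → Option T → ℝ} {k : ℕ}

def IsOutputTrans (A : pQTS S L T) (t : T) : Prop := ∀ a ∈ A.inputs, actionProb A t a = 0

lemma actionProb_eq_zero_of_not_isOutputTrans {t : T} (ht : ¬IsOutputTrans A t) {c : L}
    (hc : c ∉ A.inputs) : actionProb A t c = 0 := by
  simp only [IsOutputTrans, not_forall] at ht
  obtain ⟨a, ha, hne⟩ := ht
  exact actionProb_eq_zero_of_ne ha ((actionProb_nonneg t a).lt_of_ne' hne)
    fun hca => hc (hca ▸ ha)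

def outputPart (A : pQTS S L T) (E : PPath S L T → Option T → ℝ) :
    PPath S L T → Option T → ℝ
  | π, none => E π none + ∑ t ∈ Finset.univ.filter (fun t => ¬IsOutputTrans A t), E π (some t)
  | π, some t => if IsOutputTrans A t then E π (some t) else 0

lemma isAdversaryAt_outputPart (hE : IsAdversary A E) (π : PPath S L T) :
    IsAdversaryAt A π (outputPart A E π) := by
  refine ⟨fun o => ?_, fun t ht => ?_, ?_⟩
  · cases o with
    | none => exact add_nonneg (hE.1 π none) (Finset.sum_nonneg fun t _ => hE.1 π (some t))
    | some t =>
      simp only [outputPart]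
      split_ifs
      exacts [hE.1 π (some t), le_rfl]
  · simp only [outputPart] at ht
    split_ifs at ht
    exacts [hE.2.1 π t ht, (lt_irrefl 0 ht).elim]
  · simp only [outputPart, ← Finset.sum_filter]
    rw [add_assoc, add_comm (∑ t ∈ _, _), Finset.sum_filter_add_sum_filter_not]
    exact hE.2.2 π

lemma isAdversary_splice_outputPart (hE : IsAdversary A E) :
    IsAdversary A (splice E (outputPart A E) k) :=
  isAdversary_splice hE fun π _ => isAdversaryAt_outputPart hE π

lemma traceProb_splice_outputPart_snoc_of_mem (hE : IsAdversary A E) {σ : List L}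
    (hσ : σ.length = k) {c : L} (hc : c ∈ A.inputs) :
    traceProb A (splice E (outputPart A E) k) (σ ++ [c]) = 0 := by
  rw [traceProb_splice_snoc (isAdversary_splice_outputPart hE) hσ]
  refine Finset.sum_eq_zero fun π _ => ?_
  rw [Finset.sum_eq_zero fun t _ => ?_, mul_zero]
  simp only [outputPart]
  split_ifs with ht
  exacts [by rw [ht c hc, mul_zero], zero_mul _]

lemma traceProb_splice_outputPart_snoc_of_not_mem (hE : IsAdversary A E) {σ : List L}
    (hσ : σ.length = k) {c : L} (hc : c ∉ A.inputs) :
    traceProb A (splice E (outputPart A E) k) (σ ++ [c]) = traceProb A E (σ ++ [c]) := by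
  rw [traceProb_splice_snoc (isAdversary_splice_outputPart hE) hσ, traceProb_snoc hE]
  refine Finset.sum_congr rfl fun π _ => congrArg _ (Finset.sum_congr rfl fun t _ => ?_)
  simp only [outputPart]
  split_ifs with ht
  · rfl
  · rw [actionProb_eq_zero_of_not_isOutputTrans ht hc, mul_zero, mul_zero]

end OutputPart

section InputPart

variable {A : pQTS S L T} {F : PPath S L T → Option T → ℝ} {k : ℕ}

def inputTrans (hA : inputEnabled A) (s : S) (a : A.inputs) : T := (hA s a a.2).choose

lemma src_inputTrans (hA : inputEnabled A) (s : S) (a : A.inputs) :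
    A.src (inputTrans hA s a) = s :=
  (hA s a a.2).choose_spec.choose_spec.1

lemma actionProb_inputTrans (hA : inputEnabled A) (s : S) (a : A.inputs) (c : L) :
    actionProb A (inputTrans hA s a) c = if c = a then 1 else 0 := by
  obtain ⟨s', -, hpos⟩ := (hA s a a.2).choose_spec
  exact actionProb_eq_ite a.2
    (hpos.trans_le (Finset.single_le_sum (fun _ _ => A.dist_nonneg _ _) (Finset.mem_univ s'))) c

lemma sum_inputWeight_mul_actionProb (hA : inputEnabled A) (s : S) (w : A.inputs → ℝ) (c : L) :
    ∑ t, (∑ a, if inputTrans hA s a = t then w a else 0) * actionProb A t c =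
      ∑ a : A.inputs, if c = a then w a else 0 := by
  simp_rw [Finset.sum_mul, ite_mul, zero_mul]
  rw [Finset.sum_comm]
  simp [Finset.sum_ite_eq, actionProb_inputTrans]

def inputPart (hA : inputEnabled A) (F : PPath S L T → Option T → ℝ) (q : List L → A.inputs → ℝ) :
    PPath S L T → Option T → ℝ
  | π, none => F π none * (1 - ∑ a, q (ptrace π) a)
  | π, some t => F π (some t) +
      F π none * ∑ a, if inputTrans hA (lastState A π) a = t then q (ptrace π) a else 0

lemma isAdversaryAt_inputPart (hA : inputEnabled A) (hF : IsAdversary A F)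
    {q : List L → A.inputs → ℝ} {π : PPath S L T} (hq0 : ∀ a, 0 ≤ q (ptrace π) a)
    (hq1 : ∑ a, q (ptrace π) a ≤ 1) : IsAdversaryAt A π (inputPart hA F q π) := by
  refine ⟨fun o => ?_, fun t ht => ?_, ?_⟩
  · cases o with
    | none => exact mul_nonneg (hF.1 π none) (sub_nonneg.2 hq1)
    | some t =>
      refine add_nonneg (hF.1 π _) (mul_nonneg (hF.1 π none) (Finset.sum_nonneg fun a _ => ?_))
      split_ifs
      exacts [hq0 a, le_rfl]
  · by_contra hsrc
    have hweight : ∀ a, inputTrans hA (lastState A π) a ≠ t := fun a h =>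
      hsrc (h ▸ src_inputTrans hA _ a)
    simp [inputPart, hF.some_eq_zero_of_src_ne hsrc, hweight] at ht
  · have hswap : ∑ t, ∑ a, (if inputTrans hA (lastState A π) a = t then q (ptrace π) a else 0) =
        ∑ a, q (ptrace π) a := by
      rw [Finset.sum_comm]
      simp [Finset.sum_ite_eq]
    simp only [inputPart]
    rw [Finset.sum_add_distrib, ← Finset.mul_sum, hswap]
    linear_combination hF.2.2 π

lemma traceProb_splice_inputPart_snoc (hA : inputEnabled A) (hF : IsAdversary A F)
    {q : List L → A.inputs → ℝ} (hS : IsAdversary A (splice F (inputPart hA F q) k))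
    {σ : List L} (hσ : σ.length = k) (c : L) :
    traceProb A (splice F (inputPart hA F q) k) (σ ++ [c]) =
      traceProb A F (σ ++ [c]) + (traceProb A F σ - ∑ c', traceProb A F (σ ++ [c'])) *
        ∑ a : A.inputs, if c = a then q σ a else 0 := by
  rw [traceProb_splice_snoc hS hσ, traceProb_snoc hF, ← sum_Qprob_mul_none hF, Finset.sum_mul,
    ← Finset.sum_add_distrib]
  refine Finset.sum_congr rfl fun π hπ => ?_
  simp only [inputPart, add_mul, Finset.sum_add_distrib, mul_assoc, ← Finset.mul_sum,
    sum_inputWeight_mul_actionProb, (mem_tracePaths.1 hπ).2]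
  ring

end InputPart

lemma sum_subtype_add_sum_of_eqOn_compl {ι : Type*} [Fintype ι] {s : Set ι} {u v : ι → ℝ}
    (hs : ∀ i ∈ s, v i = 0) (hsc : ∀ i ∉ s, v i = u i) :
    ∑ i : s, u i + ∑ i, v i = ∑ i, u i := by
  rw [← Fintype.sum_subtype_add_sum_subtype (· ∈ s) u,
    ← Fintype.sum_subtype_add_sum_subtype (· ∈ s) v]
  simp only [fun i : {i // i ∈ s} => hs i i.2, fun i : {i // i ∉ s} => hsc i i.2,
    Finset.sum_const_zero, zero_add]

section InputExtension

variable {A : pQTS S L T} {F : PPath S L T → Option T → ℝ} {k : ℕ}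

lemma mem_trd_succ_of_inputExtension (hA : inputEnabled A) (hF : IsAdversary A F)
    {f : List L → ℝ} (hf0 : ∀ σ, 0 ≤ f σ)
    (hlow : ∀ σ : List L, σ.length ≤ k → traceProb A F σ = f σ)
    (hout : ∀ σ c, σ.length = k → c ∉ A.inputs → traceProb A F (σ ++ [c]) = f (σ ++ [c]))
    (hin : ∀ σ c, σ.length = k → c ∈ A.inputs → traceProb A F (σ ++ [c]) = 0)
    (hsum : ∀ σ : List L, σ.length = k → ∑ c, f (σ ++ [c]) ≤ f σ)
    (hhigh : ∀ σ : List L, k + 1 < σ.length → f σ = 0) : f ∈ trd A (k + 1) := by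
  set m : List L → ℝ := fun σ => traceProb A F σ - ∑ c, traceProb A F (σ ++ [c])
  have hm0 σ : 0 ≤ m σ := sub_nonneg.2 (sum_traceProb_snoc_le hF σ)
  have hm_ge σ (hσ : σ.length = k) : ∑ a : A.inputs, f (σ ++ [(a : L)]) ≤ m σ := by
    have := sum_subtype_add_sum_of_eqOn_compl (hin σ · hσ) (hout σ · hσ)
    linarith [hsum σ hσ, hlow σ hσ.le]
  -- Where no halting mass is left, `x / 0 = 0` makes `q` vanish.
  set q : List L → A.inputs → ℝ := fun σ a => f (σ ++ [(a : L)]) / m σ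
  have hq1 σ (hσ : σ.length = k) : ∑ a, q σ a ≤ 1 := by
    rw [← Finset.sum_div]
    exact div_le_one_of_le₀ (hm_ge σ hσ) (hm0 σ)
  have hmq σ (hσ : σ.length = k) a : m σ * q σ a = f (σ ++ [(a : L)]) := by
    rcases (hm0 σ).eq_or_lt with h | h
    · have hle := (Finset.single_le_sum (f := fun a : A.inputs => f (σ ++ [(a : L)]))
        (fun a _ => hf0 _) (Finset.mem_univ a)).trans (hm_ge σ hσ)
      rw [← h] at hle ⊢
      linarith [hf0 (σ ++ [(a : L)])]
    · exact mul_div_cancel₀ _ h.ne'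
  have hG : IsAdversary A (splice F (inputPart hA F q) k) :=
    isAdversary_splice hF fun π hπ => isAdversaryAt_inputPart hA hF
      (fun a => div_nonneg (hf0 _) (hm0 _)) (hq1 _ ((length_ptrace π).trans hπ))
  refine ⟨_, hG, haltsAfter_splice_succ, fun σ => ?_⟩
  rcases lt_trichotomy σ.length (k + 1) with hσ | hσ | hσ
  · rw [traceProb_splice_of_length_le (Nat.lt_succ_iff.1 hσ), hlow σ (by omega)]
  · obtain ⟨σ, c, rfl⟩ := (σ.eq_nil_or_concat').resolve_left (by rintro rfl; simp at hσ)
    have hσ : σ.length = k := by simpa using hσ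
    rw [traceProb_splice_inputPart_snoc hA hF hG hσ]
    by_cases hc : c ∈ A.inputs
    · have hsingle : ∀ a : A.inputs, c = a ↔ ⟨c, hc⟩ = a := fun a => by rw [Subtype.ext_iff]
      simp_rw [hsingle, Finset.sum_ite_eq, Finset.mem_univ, if_true]
      rw [hin σ c hσ hc, zero_add, hmq σ hσ]
    · have hnone : ∀ a : A.inputs, ¬c = a := fun a h => hc (h ▸ a.2)
      simp [hnone, hout σ c hσ hc]
  · rw [hhigh σ hσ, traceProb_eq_zero_of_haltsAfter hG haltsAfter_splice_succ hσ]

end InputExtension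

section Limit

open Filter Topology

variable {A : pQTS S L T} {ι : Type*} {l : Filter ι} {Es : ι → PPath S L T → Option T → ℝ}
  {E : PPath S L T → Option T → ℝ}

lemma isAdversary_of_tendsto [l.NeBot] (hEs : ∀ i, IsAdversary A (Es i))
    (h : ∀ π o, Tendsto (fun i => Es i π o) l (𝓝 (E π o))) : IsAdversary A E := by
  refine ⟨fun π o => ge_of_tendsto' (h π o) fun i => (hEs i).1 π o, fun π t ht => ?_,
    fun π => ?_⟩
  · by_contra hsrc
    have h0 : E π (some t) = 0 := tendsto_nhds_unique (h π (some t)) <| by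
      simp only [(hEs _).some_eq_zero_of_src_ne hsrc, tendsto_const_nhds]
    exact ht.ne' h0
  · refine tendsto_nhds_unique ((h π none).add (tendsto_finsetSum _ fun t _ => h π (some t))) ?_
    simp only [(hEs _).2.2 π, tendsto_const_nhds]

lemma tendsto_Qprob (h : ∀ π o, Tendsto (fun i => Es i π o) l (𝓝 (E π o))) :
    ∀ π, Tendsto (fun i => Qprob A (Es i) π) l (𝓝 (Qprob A E π))
  | [] => tendsto_const_nhds
  | x :: π => ((tendsto_Qprob h π).mul (h π (some x.1))).mul_const _

lemma tendsto_traceProb (h : ∀ π o, Tendsto (fun i => Es i π o) l (𝓝 (E π o))) (σ : List L) :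
    Tendsto (fun i => traceProb A (Es i) σ) l (𝓝 (traceProb A E σ)) :=
  tendsto_finsetSum _ fun π _ => tendsto_Qprob h π

lemma exists_tendsto_ultrafilter {Es : ℕ → PPath S L T → Option T → ℝ}
    (hEs : ∀ n, IsAdversary A (Es n)) (U : Ultrafilter ℕ) :
    ∃ E : PPath S L T → Option T → ℝ, ∀ π o, Tendsto (fun n => Es n π o) U (𝓝 (E π o)) := by
  have h π o : ∃ x, Tendsto (fun n => Es n π o) U (𝓝 x) := by
    have hmem : ↑(U.map fun n => Es n π o) ≤ 𝓟 (Set.Icc (0 : ℝ) 1) :=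
      le_principal_iff.2 (mem_map.2 (univ_mem' fun n => ⟨(hEs n).1 π o, (hEs n).le_one π o⟩))
    obtain ⟨x, -, hx⟩ := isCompact_Icc.ultrafilter_le_nhds _ hmem
    exact ⟨x, hx⟩
  choose E hE using h
  exact ⟨E, hE⟩

lemma mem_trdAll_of_forall_agree {f : List L → ℝ} (Es : ℕ → PPath S L T → Option T → ℝ)
    (hEs : ∀ n, IsAdversary A (Es n))
    (hagree : ∀ n (σ : List L), σ.length ≤ n → traceProb A (Es n) σ = f σ) : f ∈ trdAll A := by
  set U := Ultrafilter.of (atTop : Filter ℕ)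
  obtain ⟨E, hE⟩ := exists_tendsto_ultrafilter hEs U
  refine ⟨E, isAdversary_of_tendsto hEs hE, fun σ =>
    tendsto_nhds_unique ?_ (tendsto_traceProb hE σ)⟩
  refine tendsto_const_nhds.congr' (EventuallyEq.filter_mono ?_ (Ultrafilter.of_le _))
  exact eventually_atTop.2 ⟨σ.length, fun n hn => (hagree n σ hn).symm⟩

end Limit

section Pioco

variable {S1 T1 S2 T2 : Type} [Fintype S1] [Fintype T1] [Fintype S2] [Fintype T2]
  {Ai : pQTS S1 L T1} {As : pQTS S2 L T2}

lemma trd_subset_of_pioco (hin : Ai.inputs = As.inputs) (hAs : inputEnabled As)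
    (h : pioco Ai As) : ∀ k, trd Ai k ⊆ trd As k := by
  intro k
  induction k with
  | zero => rw [trd_zero, trd_zero]
  | succ k ih =>
    rintro f ⟨E, hE, hEk, hfE⟩
    obtain rfl : f = traceProb Ai E := funext hfE
    set g := traceProb Ai (splice E (outputPart Ai E) k)
    have hg_low {σ : List L} (hσ : σ.length ≤ k) : g σ = traceProb Ai E σ :=
      traceProb_splice_of_length_le hσ
    have hg : g ∈ outcont (traceProb Ai (splice E haltAdv k)) Ai k :=
      ⟨⟨_, isAdversary_splice_outputPart hE, haltsAfter_splice_succ, fun _ => rfl⟩,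
        fun σ hσ => by rw [traceProb_splice_of_length_le hσ.le, hg_low hσ.le],
        fun σ c hσ hc => traceProb_splice_outputPart_snoc_of_mem hE hσ hc⟩
    obtain ⟨⟨F, hF, -, hgF⟩, -, hg_in⟩ :=
      h k _ (ih (traceProb_splice_haltAdv_mem_trd hE k)) hg
    refine mem_trd_succ_of_inputExtension hAs hF (traceProb_nonneg hE)
      (fun σ hσ => by rw [← hgF, hg_low hσ])
      (fun σ c hσ hc => (hgF _).symm.trans
        (traceProb_splice_outputPart_snoc_of_not_mem hE hσ (hin ▸ hc)))
      (fun σ c hσ hc => by rw [← hgF, hg_in σ c hσ hc])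
      (fun σ _ => sum_traceProb_snoc_le hE σ)
      (fun σ hσ => traceProb_eq_zero_of_haltsAfter hE hEk hσ)

lemma trdAll_subset_of_forall_trd_subset (h : ∀ k, trd Ai k ⊆ trd As k) :
    trdAll Ai ⊆ trdAll As := by
  rintro f ⟨E, hE, hfE⟩
  choose Fs hFs _ hF using fun n => h n (traceProb_splice_haltAdv_mem_trd hE n)
  exact mem_trdAll_of_forall_agree Fs hFs fun n σ hσ => by
    rw [← hF, traceProb_splice_of_length_le hσ, hfE]

lemma pioco_of_trdAll_subset (hin : Ai.inputs = As.inputs) (h : trdAll Ai ⊆ trdAll As) :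
    pioco Ai As := by
  rintro k H - H' ⟨hH', hpre, hzero⟩
  exact ⟨mem_trd_of_mem_trdAll (h (trd_subset_trdAll hH')) fun σ => eq_zero_of_mem_trd hH',
    hpre, fun σ a hσ ha => hzero σ a hσ (hin ▸ ha)⟩

end Pioco

theorem stmt10_general {S1 T1 S2 T2 : Type} [Fintype S1] [Fintype T1] [Fintype S2] [Fintype T2]
    (Ai : pQTS S1 L T1) (As : pQTS S2 L T2)
    (hin : Ai.inputs = As.inputs) (hiS : inputEnabled As) :
    pioco Ai As ↔ trdAll Ai ⊆ trdAll As :=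
  ⟨fun h => trdAll_subset_of_forall_trd_subset (trd_subset_of_pioco hin hiS h),
    pioco_of_trdAll_subset hin⟩

theorem stmt10 {S1 T1 S2 T2 : Type} [Fintype S1] [Fintype T1] [Fintype S2] [Fintype T2]
    (Ai : pQTS S1 L T1) (As : pQTS S2 L T2)
    (hin : Ai.inputs = As.inputs) (hdel : Ai.delta = As.delta)
    (hiI : inputEnabled Ai) (hiS : inputEnabled As) :
    pioco Ai As ↔ trdAll Ai ⊆ trdAll As :=
  stmt10_general Ai As hin hiS
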